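/- arXiv:2204.00924 — 5 statements merged into one kernel-verified Lean document; each statement's English description precedes it below -/
import Mathlib

section
/- Let R be a commutative associative ring with identity and let S_{10} := {x_0^{10} − 2x_1^5 + 5x_2^2 mod 10R ∣ x_0, x_1, x_2 ∈ R} ⊆ R/10R. Then S_{10} is an additive subgroup of R/10R; that is, S_{10} contains 0, is closed under addition, and is closed under negation (equivalently, the set {x_0^{10} − 2x_1^5 + 5x_2^2 + 10x_3 ∣ x_0, x_1, x_2, x_3 ∈ R} is an additive subgroup of R). -/
/-!
Write `y₁ ≡ y₂` for congruence modulo `10R`. The numbers `5` and `6` are the idempotents of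
`ℤ/10 ≅ ℤ/2 × ℤ/5`, and squaring is additive modulo `2` while fifth powers are additive
modulo `5`; hence `(s, t) ↦ 5 s² + 6 t⁵` is additive modulo `10`. Its image is exactly `S₁₀`:
`x₀¹⁰ - 2 x₁⁵ + 5 x₂² ≡ 5 (x₀⁵ + x₂)² + 6 (x₀² - 2 x₁)⁵` and `5 s² + 6 t⁵ ≡ -2 (2 t)⁵ + 5 s²`.
So `S₁₀` is the range of an additive group homomorphism.
-/

open Ideal

section

variable (R : Type*) [CommRing R]

def frobeniusCRTTen : R × R →+ R ⧸ span {(10 : R)} :=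
  AddMonoidHom.mk' (fun st => Ideal.Quotient.mk _ (5 * st.1 ^ 2 + 6 * st.2 ^ 5)) <| by
    rintro ⟨s, t⟩ ⟨s', t'⟩
    obtain ⟨a, ha⟩ := exists_add_pow_prime_eq Nat.prime_two s s'
    obtain ⟨b, hb⟩ := exists_add_pow_prime_eq Nat.prime_five t t'
    rw [← map_add]
    refine Ideal.Quotient.eq.mpr (mem_span_singleton.mpr ⟨s * s' * a + 3 * t * t' * b, ?_⟩)
    simp only [Prod.fst_add, Prod.snd_add, ha, hb]
    push_cast
    ring

variable {R}

lemma frobeniusCRTTen_apply (s t : R) :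
    frobeniusCRTTen R (s, t) = Ideal.Quotient.mk _ (5 * s ^ 2 + 6 * t ^ 5) :=
  rfl

lemma mk_form_eq_frobeniusCRTTen (x₀ x₁ x₂ : R) :
    Ideal.Quotient.mk (span {(10 : R)}) (x₀ ^ 10 - 2 * x₁ ^ 5 + 5 * x₂ ^ 2) =
      frobeniusCRTTen R (x₀ ^ 5 + x₂, x₀ ^ 2 - 2 * x₁) := by
  obtain ⟨r, hr⟩ := exists_add_pow_prime_eq Nat.prime_five (x₀ ^ 2) (-2 * x₁)
  rw [frobeniusCRTTen_apply, sub_eq_add_neg (x₀ ^ 2), ← neg_mul, hr]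
  refine Ideal.Quotient.eq.mpr (mem_span_singleton.mpr
    ⟨-(x₀ ^ 10 + x₀ ^ 5 * x₂ - 19 * x₁ ^ 5 - 6 * x₀ ^ 2 * x₁ * r), ?_⟩)
  push_cast
  ring

lemma frobeniusCRTTen_eq_mk_form (s t : R) :
    frobeniusCRTTen R (s, t) =
      Ideal.Quotient.mk (span {(10 : R)}) (0 ^ 10 - 2 * (2 * t) ^ 5 + 5 * s ^ 2) :=
  Ideal.Quotient.eq.mpr (mem_span_singleton.mpr ⟨7 * t ^ 5, by ring⟩)

end

theorem stmt_3 (R : Type*) [CommRing R] :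
    ∃ S : AddSubgroup (R ⧸ Ideal.span {(10 : R)}),
      (S : Set (R ⧸ Ideal.span {(10 : R)})) =
        { y | ∃ x₀ x₁ x₂ : R,
          y = Ideal.Quotient.mk (Ideal.span {(10 : R)})
                (x₀ ^ 10 - 2 * x₁ ^ 5 + 5 * x₂ ^ 2) } := by
  refine ⟨(frobeniusCRTTen R).range, ?_⟩
  ext y
  rw [AddMonoidHom.coe_range]
  constructor
  · rintro ⟨⟨s, t⟩, rfl⟩
    exact ⟨0, 2 * t, s, frobeniusCRTTen_eq_mk_form s t⟩
  · rintro ⟨x₀, x₁, x₂, rfl⟩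
    exact ⟨_, (mk_form_eq_frobeniusCRTTen x₀ x₁ x₂).symm⟩
end

section
/- Let R be a commutative associative ring with identity and let S_{12} := {x_0^{12} + 2x_1^6 − 3x_2^4 − 4x_3^3 + 6x_4^2 mod 12R ∣ x_0, x_1, x_2, x_3, x_4 ∈ R} ⊆ R/12R. Then S_{12} is an additive subgroup of R/12R; that is, S_{12} contains 0, is closed under addition, and is closed under negation (equivalently, the set {x_0^{12} + 2x_1^6 − 3x_2^4 − 4x_3^3 + 6x_4^2 + 12x_5 ∣ x_0, x_1, x_2, x_3, x_4, x_5 ∈ R} is an additive subgroup of R). -/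
/-!
Put `G(u, v, w) = -3u⁴ - 4v³ + 6w²` (`coreForm`). The identities `x¹² = G(x³, -x⁴, 0)` and
`2x⁶ = G(0, x², x³)` show that every value of the form is a sum of three values of `G`,
so the set in question is the additive closure of the values of `G` modulo 12. That closure
is the image of `G` itself, because modulo 12
`G(u, v, w) + G(u', v', w') ≡ G(u + u', v + v', w + w' + uu')` and
`-G(u, v, w) ≡ G(u, -v, -w - u²)`.
-/

namespace TwelveForm

variable {R : Type*} [CommRing R]

def coreForm (u v w : R) : R := -3 * u ^ 4 - 4 * v ^ 3 + 6 * w ^ 2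

lemma mk_coreForm_add (u v w u' v' w' : R) :
    Ideal.Quotient.mk (Ideal.span {(12 : R)}) (coreForm u v w + coreForm u' v' w') =
      Ideal.Quotient.mk (Ideal.span {(12 : R)}) (coreForm (u + u') (v + v') (w + w' + u * u')) := by
  rw [Ideal.Quotient.eq, Ideal.mem_span_singleton']
  refine ⟨u ^ 3 * u' + u ^ 2 * u' ^ 2 + u * u' ^ 3 + v * v' * (v + v')
    - (w + w') * u * u' - w * w', ?_⟩
  unfold coreForm; ring

lemma mk_neg_coreForm (u v w : R) :
    Ideal.Quotient.mk (Ideal.span {(12 : R)}) (-coreForm u v w) =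
      Ideal.Quotient.mk (Ideal.span {(12 : R)}) (coreForm u (-v) (-w - u ^ 2)) := by
  rw [Ideal.Quotient.eq, Ideal.mem_span_singleton']
  exact ⟨-(w ^ 2 + w * u ^ 2), by unfold coreForm; ring⟩

def coreSubgroup (R : Type*) [CommRing R] : AddSubgroup (R ⧸ Ideal.span {(12 : R)}) where
  carrier := { y | ∃ u v w : R, y = Ideal.Quotient.mk (Ideal.span {(12 : R)}) (coreForm u v w) }
  zero_mem' := ⟨0, 0, 0, by simp [coreForm]⟩
  add_mem' := by
    rintro _ _ ⟨u, v, w, rfl⟩ ⟨u', v', w', rfl⟩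
    exact ⟨_, _, _, by rw [← map_add, mk_coreForm_add]⟩
  neg_mem' := by
    rintro _ ⟨u, v, w, rfl⟩
    exact ⟨_, _, _, by rw [← map_neg, mk_neg_coreForm]⟩

lemma mk_coreForm_mem_coreSubgroup (u v w : R) :
    Ideal.Quotient.mk (Ideal.span {(12 : R)}) (coreForm u v w) ∈ coreSubgroup R :=
  ⟨u, v, w, rfl⟩

end TwelveForm

open TwelveForm in
theorem stmt_4 (R : Type*) [CommRing R] :
    ∃ S : AddSubgroup (R ⧸ Ideal.span {(12 : R)}),
      (S : Set (R ⧸ Ideal.span {(12 : R)})) =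
        { y | ∃ x₀ x₁ x₂ x₃ x₄ : R,
          y = Ideal.Quotient.mk (Ideal.span {(12 : R)})
                (x₀ ^ 12 + 2 * x₁ ^ 6 - 3 * x₂ ^ 4 - 4 * x₃ ^ 3 + 6 * x₄ ^ 2) } := by
  refine ⟨coreSubgroup R, Set.ext fun y => ⟨?_, ?_⟩⟩
  · rintro ⟨u, v, w, rfl⟩
    exact ⟨0, 0, u, v, w, by simp [coreForm]⟩
  · rintro ⟨x₀, x₁, x₂, x₃, x₄, rfl⟩
    have hsplit : x₀ ^ 12 + 2 * x₁ ^ 6 - 3 * x₂ ^ 4 - 4 * x₃ ^ 3 + 6 * x₄ ^ 2 =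
        coreForm (x₀ ^ 3) (-x₀ ^ 4) 0 + coreForm 0 (x₁ ^ 2) (x₁ ^ 3) + coreForm x₂ x₃ x₄ := by
      unfold coreForm; ring
    rw [hsplit, map_add, map_add]
    exact add_mem (add_mem (mk_coreForm_mem_coreSubgroup _ _ _)
      (mk_coreForm_mem_coreSubgroup _ _ _)) (mk_coreForm_mem_coreSubgroup _ _ _)
end

section
/- Let R be a commutative associative ring with identity and let S_{14} := {x_0^{14} − 2x_1^7 + 7x_2^2 mod 14R ∣ x_0, x_1, x_2 ∈ R} ⊆ R/14R. Then S_{14} is an additive subgroup of R/14R; that is, S_{14} contains 0, is closed under addition, and is closed under negation (equivalently, the set {x_0^{14} − 2x_1^7 + 7x_2^2 + 14x_3 ∣ x_0, x_1, x_2, x_3 ∈ R} is an additive subgroup of R). -/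
/-!
Modulo 14 the set is the image of the additive map `(a, b) ↦ 7 a² + 8 b⁷`: each summand `m x^p`
with `m p ≡ 0` is additive by the binomial theorem for the prime `p`. Conversely
`x₀¹⁴ - 2 x₁⁷ + 7 x₂² ≡ 7 (x₀⁷ + x₂)² + 8 (x₀² - 2 x₁)⁷` and `7 a² + 8 b⁷ ≡ -2 (3 b)⁷ + 7 a²`.
-/

def mulPowPrimeAddHom {Q : Type*} [CommRing Q] {p : ℕ} (hp : p.Prime) (m : Q)
    (hm : m * p = 0) : Q →+ Q :=
  AddMonoidHom.mk' (fun x => m * x ^ p) fun x y => by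
    obtain ⟨r, hr⟩ := exists_add_pow_prime_eq hp x y
    linear_combination m * hr + x * y * r * hm

@[simp]
theorem mulPowPrimeAddHom_apply {Q : Type*} [CommRing Q] {p : ℕ} (hp : p.Prime) (m : Q)
    (hm : m * p = 0) (x : Q) : mulPowPrimeAddHom hp m hm x = m * x ^ p :=
  rfl

section ModFourteen

variable {Q : Type*} [CommRing Q] (h14 : (14 : Q) = 0)
include h14

def sevenSqAddEightPowSeven : Q × Q →+ Q :=
  (mulPowPrimeAddHom Nat.prime_two 7 (by push_cast; linear_combination h14)).comp
      (AddMonoidHom.fst Q Q) +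
    (mulPowPrimeAddHom Nat.prime_seven 8 (by push_cast; linear_combination 4 * h14)).comp
      (AddMonoidHom.snd Q Q)

theorem sevenSqAddEightPowSeven_apply (a b : Q) :
    sevenSqAddEightPowSeven h14 (a, b) = 7 * a ^ 2 + 8 * b ^ 7 := by
  simp [sevenSqAddEightPowSeven]

theorem sevenSqAddEightPowSeven_eq (a b : Q) :
    sevenSqAddEightPowSeven h14 (a, b) = 0 ^ 14 - 2 * (3 * b) ^ 7 + 7 * a ^ 2 := by
  rw [sevenSqAddEightPowSeven_apply]
  linear_combination (313 * b ^ 7) * h14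

theorem eq_sevenSqAddEightPowSeven (x₀ x₁ x₂ : Q) :
    x₀ ^ 14 - 2 * x₁ ^ 7 + 7 * x₂ ^ 2 =
      sevenSqAddEightPowSeven h14 (x₀ ^ 7 + x₂, x₀ ^ 2 - 2 * x₁) := by
  rw [sevenSqAddEightPowSeven, AddMonoidHom.add_apply, AddMonoidHom.comp_apply,
    AddMonoidHom.comp_apply, AddMonoidHom.coe_fst, AddMonoidHom.coe_snd, map_add, map_sub]
  simp only [mulPowPrimeAddHom_apply]
  linear_combination (-x₀ ^ 14 + 73 * x₁ ^ 7) * h14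

end ModFourteen

theorem stmt_5 (R : Type*) [CommRing R] :
    ∃ S : AddSubgroup (R ⧸ Ideal.span {(14 : R)}),
      (S : Set (R ⧸ Ideal.span {(14 : R)})) =
        { y | ∃ x₀ x₁ x₂ : R,
          y = Ideal.Quotient.mk (Ideal.span {(14 : R)})
                (x₀ ^ 14 - 2 * x₁ ^ 7 + 7 * x₂ ^ 2) } := by
  have h14 : (14 : R ⧸ Ideal.span {(14 : R)}) = 0 := by
    simpa only [map_ofNat] using
      Ideal.Quotient.eq_zero_iff_mem.mpr (Ideal.mem_span_singleton_self (14 : R))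
  refine ⟨(sevenSqAddEightPowSeven h14).range, Set.ext fun y => ⟨?_, ?_⟩⟩
  · rintro ⟨⟨a, b⟩, rfl⟩
    obtain ⟨a, rfl⟩ := Ideal.Quotient.mk_surjective a
    obtain ⟨b, rfl⟩ := Ideal.Quotient.mk_surjective b
    refine ⟨0, 3 * b, a, ?_⟩
    simp only [sevenSqAddEightPowSeven_eq h14, map_add, map_sub, map_mul, map_pow, map_ofNat,
      map_zero]
  · rintro ⟨x₀, x₁, x₂, rfl⟩
    refine ⟨(Ideal.Quotient.mk _ (x₀ ^ 7 + x₂), Ideal.Quotient.mk _ (x₀ ^ 2 - 2 * x₁)), ?_⟩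
    simp only [map_add, map_sub, map_mul, map_pow, map_ofNat, eq_sevenSqAddEightPowSeven h14]
end

section
/- Let R be a commutative associative ring with identity and let S_{15} := {x_0^{15} − 3x_1^5 + 5x_2^3 mod 15R ∣ x_0, x_1, x_2 ∈ R} ⊆ R/15R. Then S_{15} is an additive subgroup of R/15R; that is, S_{15} contains 0, is closed under addition, and is closed under negation (equivalently, the set {x_0^{15} − 3x_1^5 + 5x_2^3 + 15x_3 ∣ x_0, x_1, x_2, x_3 ∈ R} is an additive subgroup of R). -/
/-!
Modulo 3 the form is the cube `(x₀⁵ - x₂)³`, and modulo 5 it is the fifth power `(x₀³ + 2x₁)⁵`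
(as `2⁵ ≡ -3`). Since `(x + y)ᵖ ≡ xᵖ + yᵖ` modulo a prime `p`, cubes are closed under addition
modulo 3 and fifth powers modulo 5. Finally `15R = 3R ∩ 5R`, and `x₀ = 0, x₁ = 3H, x₂ = -G` gives
a value of the form that is `≡ G³ (mod 3)` and `≡ H⁵ (mod 5)` simultaneously.
-/

open Ideal

section

variable {R : Type*} [CommRing R]

theorem add_pow_prime_smodEq {p : ℕ} (hp : p.Prime) (x y : R) :
    (x + y) ^ p ≡ x ^ p + y ^ p [SMOD span {(p : R)}] := by
  obtain ⟨r, hr⟩ := exists_add_pow_prime_eq hp x y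
  rw [SModEq.sub_mem, hr, mem_span_singleton]
  exact ⟨x * y * r, by ring⟩

theorem span_mul_eq_inf_of_isCoprime {a b : R} (h : IsCoprime a b) :
    span {a * b} = span {a} ⊓ span {b} := by
  rw [← mul_eq_inf_of_isCoprime ((isCoprime_span_singleton_iff a b).mpr h),
    span_singleton_mul_span_singleton]

def form15 (x₀ x₁ x₂ : R) : R := x₀ ^ 15 - 3 * x₁ ^ 5 + 5 * x₂ ^ 3

theorem form15_neg (x₀ x₁ x₂ : R) : form15 (-x₀) (-x₁) (-x₂) = -form15 x₀ x₁ x₂ := by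
  unfold form15; ring

theorem form15_smodEq_cube (x₀ x₁ x₂ : R) :
    form15 x₀ x₁ x₂ ≡ (x₀ ^ 5 - x₂) ^ 3 [SMOD span {(3 : R)}] := by
  rw [SModEq.sub_mem, mem_span_singleton]
  exact ⟨x₀ ^ 10 * x₂ - x₀ ^ 5 * x₂ ^ 2 - x₁ ^ 5 + 2 * x₂ ^ 3, by unfold form15; ring⟩

theorem form15_smodEq_fifth_pow (x₀ x₁ x₂ : R) :
    form15 x₀ x₁ x₂ ≡ (x₀ ^ 3 + 2 * x₁) ^ 5 [SMOD span {(5 : R)}] := by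
  rw [SModEq.sub_mem, mem_span_singleton]
  exact ⟨x₂ ^ 3 - 7 * x₁ ^ 5 - 2 * x₀ ^ 12 * x₁ - 8 * x₀ ^ 9 * x₁ ^ 2 - 16 * x₀ ^ 6 * x₁ ^ 3
    - 16 * x₀ ^ 3 * x₁ ^ 4, by unfold form15; ring⟩

theorem form15_zero_smodEq_cube (G H : R) :
    form15 0 (3 * H) (-G) ≡ G ^ 3 [SMOD span {(3 : R)}] := by
  rw [SModEq.sub_mem, mem_span_singleton]
  exact ⟨-243 * H ^ 5 - 2 * G ^ 3, by unfold form15; ring⟩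

theorem form15_zero_smodEq_fifth_pow (G H : R) :
    form15 0 (3 * H) (-G) ≡ H ^ 5 [SMOD span {(5 : R)}] := by
  rw [SModEq.sub_mem, mem_span_singleton]
  exact ⟨-146 * H ^ 5 - G ^ 3, by unfold form15; ring⟩

theorem exists_form15_smodEq_add (a b c d e f : R) :
    ∃ x₀ x₁ x₂, form15 x₀ x₁ x₂ ≡ form15 a b c + form15 d e f [SMOD span {(15 : R)}] := by
  set G := (a ^ 5 - c) + (d ^ 5 - f)
  set H := (a ^ 3 + 2 * b) + (d ^ 3 + 2 * e)
  refine ⟨0, 3 * H, -G, ?_⟩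
  have h15 : (15 : R) = 3 * 5 := by norm_num
  rw [SModEq.sub_mem, h15, span_mul_eq_inf_of_isCoprime ⟨2, -1, by norm_num⟩, Submodule.mem_inf,
    ← SModEq.sub_mem, ← SModEq.sub_mem]
  constructor
  · have frobenius := add_pow_prime_smodEq Nat.prime_three (a ^ 5 - c) (d ^ 5 - f)
    rw [Nat.cast_ofNat] at frobenius
    exact (form15_zero_smodEq_cube G H).trans <|
      frobenius.trans ((form15_smodEq_cube a b c).add (form15_smodEq_cube d e f)).symm
  · have frobenius := add_pow_prime_smodEq Nat.prime_five (a ^ 3 + 2 * b) (d ^ 3 + 2 * e)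
    rw [Nat.cast_ofNat] at frobenius
    exact (form15_zero_smodEq_fifth_pow G H).trans <|
      frobenius.trans ((form15_smodEq_fifth_pow a b c).add (form15_smodEq_fifth_pow d e f)).symm

end

theorem stmt_6 (R : Type*) [CommRing R] :
    ∃ S : AddSubgroup (R ⧸ Ideal.span {(15 : R)}),
      (S : Set (R ⧸ Ideal.span {(15 : R)})) =
        { y | ∃ x₀ x₁ x₂ : R,
          y = Ideal.Quotient.mk (Ideal.span {(15 : R)})
                (x₀ ^ 15 - 3 * x₁ ^ 5 + 5 * x₂ ^ 3) } := by
  refine ⟨{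
    carrier := { y | ∃ x₀ x₁ x₂ : R, y = Ideal.Quotient.mk _ (form15 x₀ x₁ x₂) }
    zero_mem' := ⟨0, 0, 0, by simp [form15]⟩
    add_mem' := ?_
    neg_mem' := ?_ }, rfl⟩
  · rintro _ _ ⟨a, b, c, rfl⟩ ⟨d, e, f, rfl⟩
    obtain ⟨x₀, x₁, x₂, h⟩ := exists_form15_smodEq_add a b c d e f
    exact ⟨x₀, x₁, x₂, by rw [← map_add]; exact h.symm⟩
  · rintro _ ⟨a, b, c, rfl⟩
    exact ⟨-a, -b, -c, by rw [← map_neg, form15_neg]⟩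
end

section
/- Let R be a commutative associative ring with identity and M ∈ M_2(R). If M is a sum of 12th powers of matrices in M_2(R), then there exist x_0, x_1, x_2, x_3, x_4, x_5 ∈ R such that tr(M) = x_0^{12} + 2x_1^6 − 3x_2^4 − 4x_3^3 + 6x_4^2 + 12x_5. -/
/-!
The values of `x₀ ^ 12 + 2 x₁ ^ 6 - 3 x₂ ^ 4 - 4 x₃ ^ 3 + 6 x₄ ^ 2 + 12 x₅` form an additive
submonoid of `R`. It is built in layers: `12 x`, then `6 x ^ 2`, `-4 x ^ 3`, `-3 x ^ 4`, `2 x ^ 6`,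
`x ^ 12`, each layer being a submonoid because the previous one contains the defect
`c a ^ k + c b ^ k - c (a + b) ^ k` of its new term, an explicit polynomial identity.
For a `2 × 2` matrix with trace `t` and determinant `δ`, `tr (A ^ 12)` is a polynomial in `t, δ`
(from `tr (B ^ 2) = tr B ^ 2 - 2 det B` and `tr (B ^ 3) = tr B ^ 3 - 3 tr B det B`), and it takes
this form with `x₀ = t`, `x₁ = δ`, `x₂ = t δ`, `x₃ = t ^ 2 δ`, `x₄ = t ^ 4 δ`.
-/

/-- `M` is a sum of `k`-th powers in the matrix ring `M_n(R)`:
there exist finitely many matrices whose `k`-th powers sum to `M`. -/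
def IsSumOfKthPowers {n : ℕ} {R : Type*} [CommRing R] (k : ℕ)
    (M : Matrix (Fin n) (Fin n) R) : Prop :=
  ∃ l : List (Matrix (Fin n) (Fin n) R), M = (l.map (· ^ k)).sum

namespace AddSubmonoid

variable {A G : Type*} [AddMonoid A] [AddCommGroup G]

def addRange (S : AddSubmonoid G) (f : A → G) (hf₀ : f 0 = 0)
    (hf : ∀ a b, f a + f b - f (a + b) ∈ S) : AddSubmonoid G where
  carrier := {y | ∃ a, y - f a ∈ S}
  add_mem' := by
    rintro y z ⟨a, ha⟩ ⟨b, hb⟩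
    refine ⟨a + b, ?_⟩
    convert S.add_mem (S.add_mem ha hb) (hf a b) using 1
    abel
  zero_mem' := ⟨0, by simp [hf₀]⟩

theorem mem_addRange {S : AddSubmonoid G} {f : A → G} {hf₀ : f 0 = 0}
    {hf : ∀ a b, f a + f b - f (a + b) ∈ S} {y : G} :
    y ∈ S.addRange f hf₀ hf ↔ ∃ a, y - f a ∈ S :=
  Iff.rfl

end AddSubmonoid

namespace Matrix

variable {R : Type*} [CommRing R]

theorem trace_sq_fin_two (A : Matrix (Fin 2) (Fin 2) R) :
    (A ^ 2).trace = A.trace ^ 2 - 2 * A.det := by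
  simp [sq, trace_fin_two, det_fin_two, mul_apply, Fin.sum_univ_two]
  ring

theorem trace_pow_three_fin_two (A : Matrix (Fin 2) (Fin 2) R) :
    (A ^ 3).trace = A.trace ^ 3 - 3 * A.trace * A.det := by
  simp [pow_succ, trace_fin_two, det_fin_two, mul_apply, Fin.sum_univ_two]
  ring

theorem trace_pow_twelve_fin_two (A : Matrix (Fin 2) (Fin 2) R) :
    (A ^ 12).trace = A.trace ^ 12 + 2 * A.det ^ 6 - 3 * (A.trace * A.det) ^ 4
      - 4 * (A.trace ^ 2 * A.det) ^ 3 + 6 * (A.trace ^ 4 * A.det) ^ 2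
      + 12 * (-(A.trace ^ 10 * A.det) + 4 * A.trace ^ 8 * A.det ^ 2
        - 9 * A.trace ^ 6 * A.det ^ 3 + 9 * A.trace ^ 4 * A.det ^ 4
        - 3 * A.trace ^ 2 * A.det ^ 5) := by
  rw [show 12 = 2 * 2 * 3 by rfl, pow_mul, pow_mul]
  simp only [trace_pow_three_fin_two, trace_sq_fin_two, det_pow]
  ring

end Matrix

open AddSubmonoid

namespace TraceForm

variable (R : Type*) [CommRing R]

-- `upToₖ R` is the set of values of the terms of the form of degree at most `k`.
def upTo1 : AddSubmonoid R :=
  (⊥ : AddSubmonoid R).addRange (12 * ·) (by simp) fun a b => by rw [mem_bot]; ring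

def upTo2 : AddSubmonoid R :=
  (upTo1 R).addRange (6 * · ^ 2) (by simp) fun a b =>
    mem_addRange.2 ⟨-(a * b), by rw [mem_bot]; ring⟩

def upTo3 : AddSubmonoid R :=
  (upTo2 R).addRange (-4 * · ^ 3) (by simp) fun a b => by
    simp only [upTo2, upTo1, mem_addRange, mem_bot]
    exact ⟨0, a * b * (a + b), by ring⟩

def upTo4 : AddSubmonoid R :=
  (upTo3 R).addRange (-3 * · ^ 4) (by simp) fun a b => by
    simp only [upTo3, upTo2, upTo1, mem_addRange, mem_bot]
    exact ⟨0, a * b, a ^ 3 * b + a ^ 2 * b ^ 2 + a * b ^ 3, by ring⟩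

def upTo6 : AddSubmonoid R :=
  (upTo4 R).addRange (2 * · ^ 6) (by simp) fun a b => by
    simp only [upTo4, upTo3, upTo2, upTo1, mem_addRange, mem_bot]
    exact ⟨0, a * b, (a + b) * (a * b), (a + b) ^ 2 * (a * b) ^ 2 - (a + b) ^ 4 * (a * b),
      by ring⟩

def upTo12 : AddSubmonoid R :=
  (upTo6 R).addRange (· ^ 12) (by simp) fun a b => by
    simp only [upTo6, upTo4, upTo3, upTo2, upTo1, mem_addRange, mem_bot]
    exact ⟨a * b, (a + b) * (a * b), (a + b) ^ 2 * (a * b), (a + b) ^ 4 * (a * b),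
      -(a + b) ^ 10 * (a * b) + 4 * (a + b) ^ 8 * (a * b) ^ 2 - 9 * (a + b) ^ 6 * (a * b) ^ 3
        + 9 * (a + b) ^ 4 * (a * b) ^ 4 - 3 * (a + b) ^ 2 * (a * b) ^ 5, by ring⟩

variable {R}

theorem mem_upTo12 {y : R} :
    y ∈ upTo12 R ↔ ∃ x₀ x₁ x₂ x₃ x₄ x₅ : R,
      y = x₀ ^ 12 + 2 * x₁ ^ 6 - 3 * x₂ ^ 4 - 4 * x₃ ^ 3 + 6 * x₄ ^ 2 + 12 * x₅ := by
  simp only [upTo12, upTo6, upTo4, upTo3, upTo2, upTo1, mem_addRange, mem_bot]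
  constructor
  · rintro ⟨x₀, x₁, x₂, x₃, x₄, x₅, h⟩
    exact ⟨x₀, x₁, x₂, x₃, x₄, x₅, by linear_combination h⟩
  · rintro ⟨x₀, x₁, x₂, x₃, x₄, x₅, h⟩
    exact ⟨x₀, x₁, x₂, x₃, x₄, x₅, by linear_combination h⟩

theorem trace_pow_twelve_mem_upTo12 (A : Matrix (Fin 2) (Fin 2) R) :
    (A ^ 12).trace ∈ upTo12 R :=
  mem_upTo12.2 ⟨_, _, _, _, _, _, A.trace_pow_twelve_fin_two⟩

end TraceForm

theorem stmt_13 (R : Type*) [CommRing R] (M : Matrix (Fin 2) (Fin 2) R)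
    (h : IsSumOfKthPowers 12 M) :
    ∃ x₀ x₁ x₂ x₃ x₄ x₅ : R,
      M.trace = x₀ ^ 12 + 2 * x₁ ^ 6 - 3 * x₂ ^ 4 - 4 * x₃ ^ 3 + 6 * x₄ ^ 2
        + 12 * x₅ := by
  obtain ⟨l, rfl⟩ := h
  refine TraceForm.mem_upTo12.1 ?_
  rw [Matrix.trace_list_sum, List.map_map]
  refine list_sum_mem fun y hy => ?_
  obtain ⟨A, -, rfl⟩ := List.mem_map.1 hy
  exact TraceForm.trace_pow_twelve_mem_upTo12 A
end
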